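/- arXiv:2204.03553 — 2 statements merged into one kernel-verified Lean document; each statement's English description precedes it below -/
import Mathlib

section
/- Let X, Y ⊆ ω, let A be a pca, let a⊥ and a⊤ be distinct elements of A, let γ : ω ⇀ A be a partial numbering, and let d be a Y-computable (a⊥, a⊤)-decider for X with respect to γ. If γ has Y-c.e. inequivalence, then X is Turing reducible to Y. -/
namespace PCAEmb

/-! ### Oracle computability -/

/-- Codes for partial functions computable relative to an oracle. -/
inductive OCode : Type
  | zero : OCode
  | succ : OCode
  | left : OCode
  | right : OCode
  | oracle : OCode
  | pair : OCode → OCode → OCode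
  | comp : OCode → OCode → OCode
  | prec : OCode → OCode → OCode
  | rfind' : OCode → OCode

/-- Evaluation of an oracle code, relative to a (partial) oracle `O`. -/
def evalo (O : ℕ →. ℕ) : OCode → ℕ →. ℕ
  | .zero => pure 0
  | .succ => Nat.succ
  | .left => ↑fun n : ℕ => n.unpair.1
  | .right => ↑fun n : ℕ => n.unpair.2
  | .oracle => O
  | .pair cf cg => fun n => Nat.pair <$> evalo O cf n <*> evalo O cg n
  | .comp cf cg => fun n => evalo O cg n >>= evalo O cf
  | .prec cf cg =>
      Nat.unpaired fun a n =>
        n.rec (evalo O cf a) fun y IH => do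
          let i ← IH
          evalo O cg (Nat.pair a (Nat.pair y i))
  | .rfind' cf =>
      Nat.unpaired fun a m =>
        (Nat.rfind fun n => (fun x => x = 0) <$> evalo O cf (Nat.pair a (n + m))).map (· + m)

/-- The standard numbering of oracle codes. -/
def OCode.ofNat : ℕ → OCode
  | 0 => .zero
  | 1 => .succ
  | 2 => .left
  | 3 => .right
  | 4 => .oracle
  | n + 5 =>
    match n % 4 with
    | 0 => .pair (OCode.ofNat (n / 4).unpair.1) (OCode.ofNat (n / 4).unpair.2)
    | 1 => .comp (OCode.ofNat (n / 4).unpair.1) (OCode.ofNat (n / 4).unpair.2)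
    | 2 => .prec (OCode.ofNat (n / 4).unpair.1) (OCode.ofNat (n / 4).unpair.2)
    | _ => .rfind' (OCode.ofNat (n / 4).unpair.1)
  decreasing_by
    all_goals
      have h1 := Nat.unpair_left_le (n / 4)
      have h2 := Nat.unpair_right_le (n / 4)
      have h3 := Nat.div_le_self n 4
      omega

/-- The `e`-th Turing functional with oracle `O` : `Φ_e^O`. -/
def phi (O : ℕ →. ℕ) (e : ℕ) : ℕ →. ℕ := evalo O (OCode.ofNat e)

/-- The characteristic function of a set of naturals, as a (total) partial function. -/
noncomputable def chi (X : Set ℕ) : ℕ →. ℕ :=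
  fun n => Part.some (X.indicator (fun _ => 1) n)

/-- `ψ` is partial computable relative to the oracle `O`. -/
def RecursiveIn (O : ℕ →. ℕ) (ψ : ℕ →. ℕ) : Prop := ∃ c : OCode, evalo O c = ψ

/-- Turing reducibility of sets of naturals. -/
def TuringLE (X Y : Set ℕ) : Prop := RecursiveIn (chi Y) (chi X)

/-- A total function `d : ℕ → ℕ` is `Y`-computable. -/
def ComputableIn (Y : Set ℕ) (d : ℕ → ℕ) : Prop :=
  RecursiveIn (chi Y) (fun n => Part.some (d n))

/-- A binary relation on `ℕ` is `Y`-c.e. -/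
def CEIn (Y : Set ℕ) (R : ℕ → ℕ → Prop) : Prop :=
  ∃ c : OCode, ∀ n m, R n m ↔ (evalo (chi Y) c (Nat.pair n m)).Dom

/-- A set `W ⊆ ℕ` is `Y`-c.e. -/
def CE1In (Y : Set ℕ) (W : Set ℕ) : Prop :=
  ∃ c : OCode, ∀ n, n ∈ W ↔ (evalo (chi Y) c n).Dom

/-- The canonical finite set `D_u` with code `u` (binary coding). -/
def Du (u : ℕ) : Set ℕ := {k | u.testBit k}

/-- Enumeration reducibility: `Z ≤ₑ Y`. -/
def EnumLE (Z Y : Set ℕ) : Prop :=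
  ∃ W : Set ℕ, CE1In ∅ W ∧ ∀ x, x ∈ Z ↔ ∃ u, Nat.pair x u ∈ W ∧ Du u ⊆ Y

/-- The Turing jump `X'` of a set `X`. -/
def jump (X : Set ℕ) : Set ℕ := {e | (phi (chi X) e e).Dom}

/-- The halting set `K = {e : φ_e(e)↓}`. -/
def Khalt : Set ℕ := jump ∅

/-! ### Partial combinatory algebras -/

/-- `k·a·b` as a partial element. -/
def app2 {α : Type*} (app : α → α → Part α) (a b c : α) : Part α :=
  (app a b).bind fun x => app x c

/-- `s·a·b·c` as a partial element. -/
def app3 {α : Type*} (app : α → α → Part α) (a b c d : α) : Part α :=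
  (app2 app a b c).bind fun x => app x d

/-- A partial applicative structure is a pca if it has (distinct) combinators `s` and `k`. -/
def IsPCA {α : Type*} (app : α → α → Part α) : Prop :=
  ∃ s k : α, s ≠ k ∧
    (∀ a b : α, app2 app k a b = Part.some a) ∧
    (∀ a b : α, (app2 app s a b).Dom) ∧
    (∀ a b c : α,
      app3 app s a b c = (app a c).bind fun x => (app b c).bind fun y => app x y)

/-- An embedding of partial combinatory algebras: an injection that preserves
(defined) application. -/
def IsPCAEmbedding {α β : Type*} (appA : α → α → Part α) (appB : β → β → Part β)
    (f : α → β) : Prop :=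
  Function.Injective f ∧ ∀ a a' c : α, c ∈ appA a a' → f c ∈ appB (f a) (f a')

/-! ### Partial numberings -/

/-- `γ : ℕ ⇀ α` is a partial numbering (i.e. surjective). -/
def IsNumbering {α : Type*} (γ : ℕ →. α) : Prop := ∀ a : α, ∃ n, a ∈ γ n

/-- `d` is an `(a⊥, a⊤)`-decider for `X` with respect to `γ`. -/
def IsDecider {α : Type*} (γ : ℕ →. α) (abot atop : α) (X : Set ℕ) (d : ℕ → ℕ) : Prop :=
  ∀ n, (n ∉ X → γ (d n) = Part.some abot) ∧ (n ∈ X → γ (d n) = Part.some atop)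

/-- `γ` has `Y`-c.e. inequivalence. -/
def CEInequiv {α : Type*} (Y : Set ℕ) (γ : ℕ →. α) : Prop :=
  ∃ R : ℕ → ℕ → Prop, CEIn Y R ∧
    ∀ n m, (γ n).Dom → (γ m).Dom → (R n m ↔ γ n ≠ γ m)

/-- `γ` is a `Y`-effectively pca-valued partial numbering: the application is
represented on codes by a partial `Y`-computable function `ψ`. -/
def EffValued {α : Type*} (Y : Set ℕ) (app : α → α → Part α) (γ : ℕ →. α) : Prop :=
  ∃ ψ : ℕ →. ℕ, RecursiveIn (chi Y) ψ ∧
    ∀ (n m : ℕ) (a b c : α), a ∈ γ n → b ∈ γ m → c ∈ app a b →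
      ∃ j, j ∈ ψ (Nat.pair n m) ∧ c ∈ γ j

/-- `γ` is a strongly `Y`-effectively pca-valued partial numbering. -/
def StrongEffValued {α : Type*} (Y : Set ℕ) (app : α → α → Part α) (γ : ℕ →. α) : Prop :=
  ∃ ψ : ℕ →. ℕ, RecursiveIn (chi Y) ψ ∧
    (∀ (n m : ℕ) (a b c : α), a ∈ γ n → b ∈ γ m → c ∈ app a b →
      ∃ j, j ∈ ψ (Nat.pair n m) ∧ c ∈ γ j) ∧
    (∀ (n m k l : ℕ) (a b a' b' c : α), a ∈ γ n → b ∈ γ m → a' ∈ γ k → b' ∈ γ l →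
      c ∈ app a b → c ∈ app a' b' → ψ (Nat.pair n m) = ψ (Nat.pair k l))

/-! ### The models -/

/-- Kleene's first model relativized to `X`: application `n · m = Φ_n^X(m)`. -/
noncomputable def k1App (X : Set ℕ) : ℕ → ℕ → Part ℕ := fun n m => phi (chi X) n m

/-- A total function as a partial function. -/
def toPFun (g : ℕ → ℕ) : ℕ →. ℕ := fun n => Part.some (g n)

/-- Join `f ⊕ g` of two partial functions. -/
def pjoin (f g : ℕ →. ℕ) : ℕ →. ℕ := fun n =>
  if n % 2 = 0 then f (n / 2) else g (n / 2)

/-- The totalization of a partial function, as a partial element of `ℕ → ℕ`: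
defined iff `ψ` is total. -/
def partToTotal (ψ : ℕ →. ℕ) : Part (ℕ → ℕ) :=
  ⟨∀ n, (ψ n).Dom, fun H n => (ψ n).get (H n)⟩

/-- Application in Kleene's second model `K₂`: `g · h = Φ^{g⊕h}_{g 0}`,
defined iff this function is total. -/
def k2App (g h : ℕ → ℕ) : Part (ℕ → ℕ) :=
  partToTotal (phi (pjoin (toPFun g) (toPFun h)) (g 0))

/-- Application in van Oosten's sequential model `B`: `θ · ρ = Φ^{θ⊕ρ}_{θ 0}`
(always defined, as a partial function). -/
def bApp (θ ρ : ℕ →. ℕ) : Part (ℕ →. ℕ) :=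
  Part.some (fun n => (θ 0).bind fun e => phi (pjoin θ ρ) e n)

/-- Restriction of a partial applicative structure to a subset. -/
def subApp {α : Type*} (app : α → α → Part α) (P : α → Prop)
    (a b : Subtype P) : Part (Subtype P) :=
  (app a.1 b.1).bind fun c => Part.assert (P c) fun h => Part.some ⟨c, h⟩

/-- Carrier of `K₂^X` : the total `X`-computable functions. -/
def K2el (X : Set ℕ) : Type := {g : ℕ → ℕ // RecursiveIn (chi X) (toPFun g)}

/-- Application in `K₂^X`. -/
def k2XApp (X : Set ℕ) : K2el X → K2el X → Part (K2el X) :=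
  subApp k2App _

/-- Carrier of `B^X` : the partial `X`-computable functions. -/
def Bel (X : Set ℕ) : Type := {θ : ℕ →. ℕ // RecursiveIn (chi X) θ}

/-- Application in `B^X`. -/
def bXApp (X : Set ℕ) : Bel X → Bel X → Part (Bel X) :=
  subApp bApp _

/-- Application in Scott's graph model `G`. -/
def gApp (A B : Set ℕ) : Part (Set ℕ) :=
  Part.some {n | ∃ u, Nat.pair n u ∈ A ∧ Du u ⊆ B}

/-- Carrier of `G^Z` : the sets enumeration-reducible to `Z`. -/
def Gel (Z : Set ℕ) : Type := {A : Set ℕ // EnumLE A Z}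

/-- Application in `G^Z`. -/
def gXApp (Z : Set ℕ) : Gel Z → Gel Z → Part (Gel Z) :=
  subApp gApp _

/-- `X ⊕ X̄ = {2n : n ∈ X} ∪ {2n+1 : n ∉ X}`. -/
def joinCompl (X : Set ℕ) : Set ℕ :=
  {k | ∃ n, (k = 2 * n ∧ n ∈ X) ∨ (k = 2 * n + 1 ∧ n ∉ X)}

/-! ### The λ-calculus -/

/-- Untyped λ-terms (de Bruijn representation). -/
inductive Lam : Type
  | var : ℕ → Lam
  | app : Lam → Lam → Lam
  | abs : Lam → Lam

/-- Lift (shift up) the free variables `≥ d` of a term. -/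
def Lam.lift : Lam → ℕ → Lam
  | .var n, d => if n < d then .var n else .var (n + 1)
  | .app M N, d => .app (M.lift d) (N.lift d)
  | .abs M, d => .abs (M.lift (d + 1))

/-- Substitution `M[k := N]` (de Bruijn). -/
def Lam.subst : Lam → ℕ → Lam → Lam
  | .var n, k, N => if n = k then N else if k < n then .var (n - 1) else .var n
  | .app M M', k, N => .app (M.subst k N) (M'.subst k N)
  | .abs M, k, N => .abs (M.subst (k + 1) (N.lift 0))

/-- β-equivalence of λ-terms. -/
inductive BetaEq : Lam → Lam → Prop
  | beta (M N : Lam) : BetaEq (.app (.abs M) N) (M.subst 0 N)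
  | refl (M : Lam) : BetaEq M M
  | symm {M N : Lam} : BetaEq M N → BetaEq N M
  | trans {M N P : Lam} : BetaEq M N → BetaEq N P → BetaEq M P
  | appCongr {M M' N N' : Lam} :
      BetaEq M M' → BetaEq N N' → BetaEq (.app M N) (.app M' N')
  | absCongr {M M' : Lam} : BetaEq M M' → BetaEq (.abs M) (.abs M')

/-- βη-equivalence of λ-terms. -/
inductive BetaEtaEq : Lam → Lam → Prop
  | beta (M N : Lam) : BetaEtaEq (.app (.abs M) N) (M.subst 0 N)
  | eta (M : Lam) : BetaEtaEq (.abs (.app (M.lift 0) (.var 0))) M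
  | refl (M : Lam) : BetaEtaEq M M
  | symm {M N : Lam} : BetaEtaEq M N → BetaEtaEq N M
  | trans {M N P : Lam} : BetaEtaEq M N → BetaEtaEq N P → BetaEtaEq M P
  | appCongr {M M' N N' : Lam} :
      BetaEtaEq M M' → BetaEtaEq N N' → BetaEtaEq (.app M N) (.app M' N')
  | absCongr {M M' : Lam} : BetaEtaEq M M' → BetaEtaEq (.abs M) (.abs M')

def lamBetaSetoid : Setoid Lam := ⟨BetaEq, ⟨BetaEq.refl, BetaEq.symm, BetaEq.trans⟩⟩

def lamBetaEtaSetoid : Setoid Lam :=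
  ⟨BetaEtaEq, ⟨BetaEtaEq.refl, BetaEtaEq.symm, BetaEtaEq.trans⟩⟩

/-- The pca `λ` of λ-terms modulo β-equivalence. -/
def LamBeta : Type := Quotient lamBetaSetoid

/-- The pca `λη` of λ-terms modulo βη-equivalence. -/
def LamBetaEta : Type := Quotient lamBetaEtaSetoid

/-- Application in `λ` (total). -/
def lamBetaApp : LamBeta → LamBeta → Part LamBeta := fun a b =>
  Part.some (Quotient.map₂ Lam.app (fun _ _ h1 _ _ h2 => BetaEq.appCongr h1 h2) a b)

/-- Application in `λη` (total). -/
def lamBetaEtaApp : LamBetaEta → LamBetaEta → Part LamBetaEta := fun a b =>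
  Part.some (Quotient.map₂ Lam.app (fun _ _ h1 _ _ h2 => BetaEtaEq.appCongr h1 h2) a b)


@[simp] theorem pfun_some_bind (a : ℕ) (f : ℕ →. ℕ) : (Part.some a).bind f = f a :=
  Part.bind_some a f

@[simp] theorem pfun_some_bind' (a : ℕ) (f : ℕ →. ℕ) : (Part.some a >>= f) = f a :=
  Part.bind_some a f

@[simp] theorem pfun_pure_apply (a n : ℕ) : (pure a : ℕ →. ℕ) n = Part.some a := rfl

theorem pfun_mem_bind_iff {x : Part ℕ} {f : ℕ →. ℕ} {y : ℕ} :
    y ∈ x.bind f ↔ ∃ a ∈ x, y ∈ f a := Part.mem_bind_iff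

open Nat.Partrec (Code)

/-- Translation of plain codes into oracle codes. -/
def ofCode : Code → OCode
  | .zero => .zero
  | .succ => .succ
  | .left => .left
  | .right => .right
  | .pair f g => .pair (ofCode f) (ofCode g)
  | .comp f g => .comp (ofCode f) (ofCode g)
  | .prec f g => .prec (ofCode f) (ofCode g)
  | .rfind' f => .rfind' (ofCode f)

theorem evalo_ofCode (O : ℕ →. ℕ) : ∀ c : Code, evalo O (ofCode c) = c.eval := by
  intro c
  induction c with
  | zero => rfl
  | succ => rfl
  | left => rfl
  | right => rfl
  | pair f g hf hg => simp [ofCode, evalo, Code.eval, hf, hg]; rfl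
  | comp f g hf hg => simp [ofCode, evalo, Code.eval, hf, hg]; rfl
  | prec f g hf hg => simp [ofCode, evalo, Code.eval, hf, hg]; rfl
  | rfind' f hf => simp [ofCode, evalo, Code.eval, hf]; rfl

theorem RecursiveIn.of_partrec {O f} (h : Nat.Partrec f) : RecursiveIn O f := by
  obtain ⟨c, hc⟩ := Code.exists_code.1 h
  exact ⟨ofCode c, (evalo_ofCode O c).trans hc⟩

theorem RecursiveIn.oracle {O : ℕ →. ℕ} : RecursiveIn O O := ⟨.oracle, rfl⟩

theorem RecursiveIn.comp {O f g} (hf : RecursiveIn O f) (hg : RecursiveIn O g) :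
    RecursiveIn O fun n => g n >>= f := by
  obtain ⟨cf, rfl⟩ := hf; obtain ⟨cg, rfl⟩ := hg
  exact ⟨.comp cf cg, rfl⟩

theorem RecursiveIn.pair {O f g} (hf : RecursiveIn O f) (hg : RecursiveIn O g) :
    RecursiveIn O fun n => Nat.pair <$> f n <*> g n := by
  obtain ⟨cf, rfl⟩ := hf; obtain ⟨cg, rfl⟩ := hg
  exact ⟨.pair cf cg, rfl⟩

theorem RecursiveIn.prec {O f g} (hf : RecursiveIn O f) (hg : RecursiveIn O g) :
    RecursiveIn O (Nat.unpaired fun a n =>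
      n.rec (f a) fun y IH => IH.bind fun i => g (Nat.pair a (Nat.pair y i))) := by
  obtain ⟨cf, rfl⟩ := hf; obtain ⟨cg, rfl⟩ := hg
  exact ⟨.prec cf cg, rfl⟩

theorem RecursiveIn.rfind {O f} (hf : RecursiveIn O f) :
    RecursiveIn O fun a => Nat.rfind fun n => (fun m => m = 0) <$> f (Nat.pair a n) := by
  obtain ⟨cf, rfl⟩ := hf
  refine ⟨.comp (.rfind' cf) (.pair (ofCode Code.id) .zero), ?_⟩
  funext a
  have h0 : (pure 0 : ℕ →. ℕ) a = Part.some 0 := rfl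
  simp [evalo, evalo_ofCode, Seq.seq, Nat.unpaired, h0, Part.bind_some, Part.map_id']

theorem RecursiveIn.of_computable {O : ℕ →. ℕ} {f : ℕ → ℕ} (h : Computable f) :
    RecursiveIn O (toPFun f) :=
  RecursiveIn.of_partrec (Partrec.nat_iff.1 h)

theorem RecursiveIn.totalComp {O : ℕ →. ℕ} {f g : ℕ → ℕ} (hf : RecursiveIn O (toPFun f))
    (hg : RecursiveIn O (toPFun g)) : RecursiveIn O (toPFun fun n => f (g n)) := by
  have := hf.comp hg
  refine (congrArg (RecursiveIn O) ?_).mpr this; funext n; exact (Part.bind_some _ _).symm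

theorem RecursiveIn.totalPair {O : ℕ →. ℕ} {f g : ℕ → ℕ} (hf : RecursiveIn O (toPFun f))
    (hg : RecursiveIn O (toPFun g)) :
    RecursiveIn O (toPFun fun n => Nat.pair (f n) (g n)) := by
  have := hf.pair hg
  simp [toPFun, Seq.seq] at this; exact this

/-- bind with pairing of the input -/
theorem RecursiveIn.bindPair {O : ℕ →. ℕ} {f : ℕ →. ℕ} {g : ℕ → ℕ}
    (hf : RecursiveIn O f) (hg : RecursiveIn O (toPFun g)) :
    RecursiveIn O fun n => (f n).bind fun w => Part.some (g (Nat.pair n w)) := by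
  obtain ⟨cf, rfl⟩ := hf; obtain ⟨cg, hcg⟩ := hg
  refine ⟨.comp cg (.pair (ofCode Code.id) cf), ?_⟩
  funext a
  simp [evalo, evalo_ofCode, hcg, Seq.seq, toPFun]; exact Part.bind_map _ _ _

/-- primitive recursion producing total functions -/
theorem RecursiveIn.totalPrec {O : ℕ →. ℕ} {b g : ℕ → ℕ} (hb : RecursiveIn O (toPFun b))
    (hg : RecursiveIn O (toPFun g)) :
    RecursiveIn O (toPFun fun p =>
      Nat.rec (motive := fun _ => ℕ) (b p.unpair.1)
        (fun y IH => g (Nat.pair p.unpair.1 (Nat.pair y IH))) p.unpair.2) := by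
  have H := hb.prec hg
  refine (congrArg (RecursiveIn O) ?_).mpr H; funext p; simp only [Nat.unpaired, toPFun]; induction p.unpair.2 with
  | zero => simp
  | succ n ih =>
      have step : (Nat.rec (Part.some (b (Nat.unpair p).1))
          (fun y IH => IH.bind fun i => Part.some (g (Nat.pair (Nat.unpair p).1 (Nat.pair y i))))
          (n+1) : Part ℕ)
        = (Nat.rec (Part.some (b (Nat.unpair p).1))
          (fun y IH => IH.bind fun i => Part.some (g (Nat.pair (Nat.unpair p).1 (Nat.pair y i))))
          n : Part ℕ).bind
            fun i => Part.some (g (Nat.pair (Nat.unpair p).1 (Nat.pair n i))) := rfl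
      rw [step, ← ih, Part.bind_some]

/-! ### Section 2: oracle-prefix translation -/

theorem natrec_succ {α : Sort*} (b : α) (F : ℕ → α → α) (n : ℕ) :
    (Nat.rec b F (Nat.succ n) : α) = F n (Nat.rec b F n) := rfl

theorem eval_comp' (cf cg : Code) (n : ℕ) :
    (Code.comp cf cg).eval n = (cg.eval n).bind cf.eval := rfl

theorem mem_eval_pair {cf cg : Code} {n y : ℕ} :
    y ∈ (Code.pair cf cg).eval n ↔
      ∃ a ∈ cf.eval n, ∃ b ∈ cg.eval n, Nat.pair a b = y := by
  simp [Code.eval, Seq.seq]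

theorem mem_eval_left {n y : ℕ} : y ∈ Code.left.eval n ↔ y = n.unpair.1 := by
  simp [Code.eval, eq_comm]

theorem eval_prec' (cf cg : Code) (A n : ℕ) :
    (Code.prec cf cg).eval (Nat.pair A n) =
      n.rec (cf.eval A) (fun y IH => IH.bind fun i => cg.eval (Nat.pair A (Nat.pair y i))) := by
  simp [Code.eval, Nat.unpaired]

theorem eval_rfind'2 (cf : Code) (A m : ℕ) :
    (Code.rfind' cf).eval (Nat.pair A m) =
      (Nat.rfind fun n => (fun x => x = 0) <$> cf.eval (Nat.pair A (n + m))).map (· + m) := by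
  simp [Code.eval, Nat.unpaired]

theorem evalo_prec (O : ℕ →. ℕ) (f g : OCode) (a n : ℕ) :
    evalo O (.prec f g) (Nat.pair a n) =
      n.rec (evalo O f a) (fun y IH => IH.bind fun i => evalo O g (Nat.pair a (Nat.pair y i))) := by
  simp [evalo, Nat.unpaired]

theorem evalo_rfind' (O : ℕ →. ℕ) (f : OCode) (a m : ℕ) :
    evalo O (.rfind' f) (Nat.pair a m) =
      (Nat.rfind fun n => (fun x => x = 0) <$> evalo O f (Nat.pair a (n + m))).map (· + m) := by
  simp [evalo, Nat.unpaired]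

theorem mem_evalo_pair {O : ℕ →. ℕ} {f g : OCode} {n y : ℕ} :
    y ∈ evalo O (.pair f g) n ↔
      ∃ a ∈ evalo O f n, ∃ b ∈ evalo O g n, Nat.pair a b = y := by
  simp [evalo, Seq.seq]

def lookupPart : ℕ →. ℕ := fun p =>
  Part.ofOption ((Denumerable.ofNat (List ℕ) p.unpair.1)[p.unpair.2]?)

theorem lookup_partrec : Nat.Partrec lookupPart := by
  have hc : Computable fun p : ℕ => (Denumerable.ofNat (List ℕ) p.unpair.1)[p.unpair.2]? :=
    (Primrec.list_getElem?.comp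
      ((Primrec.ofNat (List ℕ)).comp (Primrec.fst.comp Primrec.unpair))
      (Primrec.snd.comp Primrec.unpair)).to_comp
  exact Partrec.nat_iff.1 (hc.ofOption)

noncomputable def lookupCode : Code := (Code.exists_code.1 lookup_partrec).choose

theorem lookupCode_eval : lookupCode.eval = lookupPart :=
  (Code.exists_code.1 lookup_partrec).choose_spec

/-- `pair σ (pair a n) ↦ pair (pair σ a) n` -/
def tauPre : Code :=
  Code.pair (Code.pair Code.left (Code.comp Code.left Code.right))
    (Code.comp Code.right Code.right)

/-- rearranges `pair (pair σ a) z ↦ pair σ (pair a z)` then runs `c`. -/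
def tauArg (c : Code) : Code :=
  Code.comp c (Code.pair (Code.comp Code.left Code.left)
    (Code.pair (Code.comp Code.right Code.left) Code.right))

noncomputable def tau : OCode → Code
  | .zero => Code.zero
  | .succ => Code.comp Code.succ Code.right
  | .left => Code.comp Code.left Code.right
  | .right => Code.comp Code.right Code.right
  | .oracle => lookupCode
  | .pair f g => Code.pair (tau f) (tau g)
  | .comp f g => Code.comp (tau f) (Code.pair Code.left (tau g))
  | .prec f g => Code.comp (Code.prec (tau f) (tauArg (tau g))) tauPre
  | .rfind' f => Code.comp (Code.rfind' (tauArg (tau f))) tauPre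

theorem eval_tauPre (σ x : ℕ) :
    tauPre.eval (Nat.pair σ x) =
      Part.some (Nat.pair (Nat.pair σ x.unpair.1) x.unpair.2) := by
  simp [tauPre, Code.eval, Seq.seq]

theorem eval_tauArg (c : Code) (σ a z : ℕ) :
    (tauArg c).eval (Nat.pair (Nat.pair σ a) z) = c.eval (Nat.pair σ (Nat.pair a z)) := by
  simp [tauArg, eval_comp', Code.eval, Seq.seq]

theorem eval_tau_prec (f g : OCode) (σ x : ℕ) :
    (tau (.prec f g)).eval (Nat.pair σ x) =
      (Code.prec (tau f) (tauArg (tau g))).eval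
        (Nat.pair (Nat.pair σ x.unpair.1) x.unpair.2) := by
  rw [tau, eval_comp', eval_tauPre]; exact Part.bind_some _ _

theorem eval_tau_rfind' (f : OCode) (σ x : ℕ) :
    (tau (.rfind' f)).eval (Nat.pair σ x) =
      (Code.rfind' (tauArg (tau f))).eval
        (Nat.pair (Nat.pair σ x.unpair.1) x.unpair.2) := by
  rw [tau, eval_comp', eval_tauPre]; exact Part.bind_some _ _

/-- code of the length-`s` prefix of `χ`. -/
def ystr (χ : ℕ → ℕ) (s : ℕ) : ℕ := Encodable.encode ((List.range s).map χ)

theorem ystr_get? (χ : ℕ → ℕ) (s x : ℕ) :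
    (Denumerable.ofNat (List ℕ) (ystr χ s))[x]? =
      if x < s then some (χ x) else none := by
  rw [ystr, Denumerable.ofNat_encode]
  by_cases h : x < s
  · simp [h, List.getElem?_map, List.getElem?_range h]
  · rw [List.getElem?_eq_none (by simp; omega)]
    simp [h]

theorem mem_eval_tau_oracle {χ : ℕ → ℕ} {s x y : ℕ} :
    y ∈ (tau .oracle).eval (Nat.pair (ystr χ s) x) ↔ x < s ∧ y = χ x := by
  rw [tau, lookupCode_eval]
  simp only [lookupPart, Nat.unpair_pair, Part.mem_ofOption, ystr_get?]
  by_cases h : x < s <;> simp [h, eq_comm]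

theorem exists_bound {P : ℕ → ℕ → Prop} (mono : ∀ {s s'} m, s ≤ s' → P s m → P s' m) :
    ∀ n, (∀ m < n, ∃ s, P s m) → ∃ s, ∀ m < n, P s m := by
  intro n
  induction n with
  | zero => exact fun _ => ⟨0, fun m hm => absurd hm (Nat.not_lt_zero m)⟩
  | succ n ih =>
      intro h
      obtain ⟨s₁, hs₁⟩ := ih fun m hm => h m (hm.trans (Nat.lt_succ_self n))
      obtain ⟨s₂, hs₂⟩ := h n (Nat.lt_succ_self n)
      refine ⟨max s₁ s₂, fun m hm => ?_⟩
      rcases Nat.lt_succ_iff_lt_or_eq.1 hm with hm' | rfl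
      · exact mono m (le_max_left _ _) (hs₁ m hm')
      · exact mono m (le_max_right _ _) hs₂

theorem tau_mono (χ : ℕ → ℕ) :
    ∀ (c : OCode) {s s' x y}, s ≤ s' →
      y ∈ (tau c).eval (Nat.pair (ystr χ s) x) →
      y ∈ (tau c).eval (Nat.pair (ystr χ s') x) := by
  intro c
  induction c with
  | zero => intro s s' x y _ h; simpa [tau, Code.eval] using h
  | succ => intro s s' x y _ h; simpa [tau, eval_comp', Code.eval] using h
  | left => intro s s' x y _ h; simpa [tau, eval_comp', Code.eval] using h
  | right => intro s s' x y _ h; simpa [tau, eval_comp', Code.eval] using h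
  | oracle =>
      intro s s' x y hs h
      rw [mem_eval_tau_oracle] at h ⊢
      exact ⟨h.1.trans_le hs, h.2⟩
  | pair f g hf hg =>
      intro s s' x y hs h
      simp only [tau] at h ⊢
      rw [mem_eval_pair] at h ⊢
      obtain ⟨a, ha, b, hb, rfl⟩ := h
      exact ⟨a, hf hs ha, b, hg hs hb, rfl⟩
  | comp f g hf hg =>
      intro s s' x y hs h
      rw [tau, eval_comp', pfun_mem_bind_iff] at h ⊢
      obtain ⟨z, hz, hy⟩ := h
      rw [mem_eval_pair] at hz
      obtain ⟨a, ha, b, hb, rfl⟩ := hz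
      rw [mem_eval_left] at ha
      subst ha
      simp only [Nat.unpair_pair] at *
      refine ⟨Nat.pair (ystr χ s') b, ?_, hf hs hy⟩
      rw [mem_eval_pair]
      exact ⟨ystr χ s', mem_eval_left.2 (by simp), b, hg hs hb, rfl⟩
  | prec f g hf hg =>
      intro s s' x y hs h
      obtain ⟨a, n, rfl⟩ : ∃ a n, x = Nat.pair a n := ⟨_, _, (Nat.pair_unpair x).symm⟩
      rw [eval_tau_prec] at h ⊢
      simp only [Nat.unpair_pair] at h ⊢
      rw [eval_prec'] at h ⊢
      induction n generalizing y with
      | zero => exact hf hs h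
      | succ n ihn =>
          simp only [Nat.rec_add_one] at h ⊢
          rw [Part.mem_bind_iff] at h ⊢
          obtain ⟨i, hi, hy⟩ := h
          refine ⟨i, ihn hi, ?_⟩
          rw [eval_tauArg] at hy ⊢
          exact hg hs hy
  | rfind' f hf =>
      intro s s' x y hs h
      obtain ⟨a, m, rfl⟩ : ∃ a m, x = Nat.pair a m := ⟨_, _, (Nat.pair_unpair x).symm⟩
      rw [eval_tau_rfind'] at h ⊢
      simp only [Nat.unpair_pair] at h ⊢
      rw [eval_rfind'2] at h ⊢
      obtain ⟨n₀, hn₀, rfl⟩ := Part.mem_map_iff _ |>.1 h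
      have hn := Nat.mem_rfind.1 hn₀
      refine Part.mem_map_iff _ |>.2 ⟨n₀, Nat.mem_rfind.2 ⟨?_, fun {m'} hm' => ?_⟩, rfl⟩
      · obtain ⟨v, hv, hd⟩ := Part.mem_map_iff _ |>.1 hn.1
        rw [eval_tauArg] at hv
        exact Part.mem_map_iff _ |>.2 ⟨v, by rw [eval_tauArg]; exact hf hs hv, hd⟩
      · obtain ⟨v, hv, hd⟩ := Part.mem_map_iff _ |>.1 (hn.2 hm')
        rw [eval_tauArg] at hv
        exact Part.mem_map_iff _ |>.2 ⟨v, by rw [eval_tauArg]; exact hf hs hv, hd⟩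

theorem tau_sound (χ : ℕ → ℕ) :
    ∀ (c : OCode) {s x y},
      y ∈ (tau c).eval (Nat.pair (ystr χ s) x) → y ∈ evalo (toPFun χ) c x := by
  intro c
  induction c with
  | zero => intro s x y h; simpa [tau, Code.eval, evalo] using h
  | succ => intro s x y h; simpa [tau, eval_comp', Code.eval, evalo] using h
  | left => intro s x y h; simpa [tau, eval_comp', Code.eval, evalo] using h
  | right => intro s x y h; simpa [tau, eval_comp', Code.eval, evalo] using h
  | oracle =>
      intro s x y h
      rw [mem_eval_tau_oracle] at h
      simp [evalo, toPFun, h.2]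
  | pair f g hf hg =>
      intro s x y h
      simp only [tau] at h
      rw [mem_eval_pair] at h
      obtain ⟨a, ha, b, hb, rfl⟩ := h
      exact mem_evalo_pair.2 ⟨a, hf ha, b, hg hb, rfl⟩
  | comp f g hf hg =>
      intro s x y h
      rw [tau, eval_comp', pfun_mem_bind_iff] at h
      obtain ⟨z, hz, hy⟩ := h
      rw [mem_eval_pair] at hz
      obtain ⟨a, ha, b, hb, rfl⟩ := hz
      rw [mem_eval_left] at ha
      subst ha
      simp only [Nat.unpair_pair] at *
      exact Part.mem_bind_iff.2 ⟨b, hg hb, hf hy⟩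
  | prec f g hf hg =>
      intro s x y h
      obtain ⟨a, n, rfl⟩ : ∃ a n, x = Nat.pair a n := ⟨_, _, (Nat.pair_unpair x).symm⟩
      rw [eval_tau_prec] at h
      simp only [Nat.unpair_pair] at h
      rw [eval_prec'] at h
      rw [evalo_prec]
      induction n generalizing y with
      | zero => exact hf h
      | succ n ihn =>
          simp only [Nat.rec_add_one] at h ⊢
          rw [Part.mem_bind_iff] at h ⊢
          obtain ⟨i, hi, hy⟩ := h
          refine ⟨i, ihn hi, ?_⟩
          rw [eval_tauArg] at hy
          exact hg hy
  | rfind' f hf =>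
      intro s x y h
      obtain ⟨a, m, rfl⟩ : ∃ a m, x = Nat.pair a m := ⟨_, _, (Nat.pair_unpair x).symm⟩
      rw [eval_tau_rfind'] at h
      simp only [Nat.unpair_pair] at h
      rw [eval_rfind'2] at h
      rw [evalo_rfind']
      obtain ⟨n₀, hn₀, rfl⟩ := Part.mem_map_iff _ |>.1 h
      have hn := Nat.mem_rfind.1 hn₀
      refine Part.mem_map_iff _ |>.2 ⟨n₀, Nat.mem_rfind.2 ⟨?_, fun {m'} hm' => ?_⟩, rfl⟩
      · obtain ⟨v, hv, hd⟩ := Part.mem_map_iff _ |>.1 hn.1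
        rw [eval_tauArg] at hv
        exact Part.mem_map_iff _ |>.2 ⟨v, hf hv, hd⟩
      · obtain ⟨v, hv, hd⟩ := Part.mem_map_iff _ |>.1 (hn.2 hm')
        rw [eval_tauArg] at hv
        exact Part.mem_map_iff _ |>.2 ⟨v, hf hv, hd⟩

theorem tau_complete (χ : ℕ → ℕ) :
    ∀ (c : OCode) {x y},
      y ∈ evalo (toPFun χ) c x → ∃ s, y ∈ (tau c).eval (Nat.pair (ystr χ s) x) := by
  intro c
  induction c with
  | zero => intro x y h; exact ⟨0, by simpa [tau, Code.eval, evalo] using h⟩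
  | succ => intro x y h; exact ⟨0, by simpa [tau, eval_comp', Code.eval, evalo] using h⟩
  | left => intro x y h; exact ⟨0, by simpa [tau, eval_comp', Code.eval, evalo] using h⟩
  | right => intro x y h; exact ⟨0, by simpa [tau, eval_comp', Code.eval, evalo] using h⟩
  | oracle =>
      intro x y h
      have hy : y = χ x := by simpa [evalo, toPFun] using h
      exact ⟨x + 1, mem_eval_tau_oracle.2 ⟨Nat.lt_succ_self x, hy⟩⟩
  | pair f g hf hg =>
      intro x y h
      rw [mem_evalo_pair] at h
      obtain ⟨a, ha, b, hb, rfl⟩ := h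
      obtain ⟨s₁, h1⟩ := hf ha
      obtain ⟨s₂, h2⟩ := hg hb
      refine ⟨max s₁ s₂, ?_⟩
      simp only [tau]
      exact mem_eval_pair.2 ⟨a, tau_mono χ f (le_max_left _ _) h1, b,
        tau_mono χ g (le_max_right _ _) h2, rfl⟩
  | comp f g hf hg =>
      intro x y h
      rw [show evalo (toPFun χ) (.comp f g) x = (evalo (toPFun χ) g x).bind (evalo (toPFun χ) f)
        from rfl, pfun_mem_bind_iff] at h
      obtain ⟨b, hb, hy⟩ := h
      obtain ⟨s₁, h1⟩ := hg hb
      obtain ⟨s₂, h2⟩ := hf hy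
      refine ⟨max s₁ s₂, ?_⟩
      rw [tau, eval_comp', pfun_mem_bind_iff]
      refine ⟨Nat.pair (ystr χ (max s₁ s₂)) b, ?_, tau_mono χ f (le_max_right _ _) h2⟩
      exact mem_eval_pair.2 ⟨_, mem_eval_left.2 (by simp), b,
        tau_mono χ g (le_max_left _ _) h1, rfl⟩
  | prec f g hf hg =>
      intro x y h
      obtain ⟨a, n, rfl⟩ : ∃ a n, x = Nat.pair a n := ⟨_, _, (Nat.pair_unpair x).symm⟩
      rw [evalo_prec] at h
      simp only [eval_tau_prec, Nat.unpair_pair, eval_prec']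
      induction n generalizing y with
      | zero => exact hf h
      | succ n ihn =>
          simp only [Nat.rec_add_one] at h
          rw [Part.mem_bind_iff] at h
          obtain ⟨i, hi, hy⟩ := h
          obtain ⟨s₁, h1⟩ := ihn hi
          obtain ⟨s₂, h2⟩ := hg hy
          refine ⟨max s₁ s₂, ?_⟩
          simp only [Nat.rec_add_one]
          rw [Part.mem_bind_iff]
          have h1' : i ∈ (tau (.prec f g)).eval
              (Nat.pair (ystr χ (max s₁ s₂)) (Nat.pair a n)) := by
            refine tau_mono χ _ (le_max_left _ _) ?_
            rw [eval_tau_prec]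
            simp only [Nat.unpair_pair]
            rw [eval_prec']
            exact h1
          rw [eval_tau_prec] at h1'
          simp only [Nat.unpair_pair] at h1'
          rw [eval_prec'] at h1'
          refine ⟨i, h1', ?_⟩
          rw [eval_tauArg]
          exact tau_mono χ g (le_max_right _ _) h2
  | rfind' f hf =>
      intro x y h
      obtain ⟨a, m, rfl⟩ : ∃ a m, x = Nat.pair a m := ⟨_, _, (Nat.pair_unpair x).symm⟩
      rw [evalo_rfind'] at h
      obtain ⟨n₀, hn₀, rfl⟩ := Part.mem_map_iff _ |>.1 h
      have hn := Nat.mem_rfind.1 hn₀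
      obtain ⟨v, hv, hd⟩ := Part.mem_map_iff _ |>.1 hn.1
      obtain ⟨st, hst⟩ := hf hv
      have hmin : ∀ m' < n₀, ∃ s, false ∈ (fun x : ℕ => decide (x = 0)) <$>
          (tauArg (tau f)).eval (Nat.pair (Nat.pair (ystr χ s) a) (m' + m)) := by
        intro m' hm'
        obtain ⟨v', hv', hd'⟩ := Part.mem_map_iff _ |>.1 (hn.2 hm')
        obtain ⟨s', hs'⟩ := hf hv'
        exact ⟨s', Part.mem_map_iff _ |>.2 ⟨v', by rw [eval_tauArg]; exact hs', hd'⟩⟩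
      have hmono : ∀ {s s' : ℕ} (m' : ℕ), s ≤ s' →
          (false ∈ (fun x : ℕ => decide (x = 0)) <$>
            (tauArg (tau f)).eval (Nat.pair (Nat.pair (ystr χ s) a) (m' + m))) →
          false ∈ (fun x : ℕ => decide (x = 0)) <$>
            (tauArg (tau f)).eval (Nat.pair (Nat.pair (ystr χ s') a) (m' + m)) := by
        intro s s' m' hle hmem
        obtain ⟨v', hv', hd'⟩ := Part.mem_map_iff _ |>.1 hmem
        rw [eval_tauArg] at hv'
        exact Part.mem_map_iff _ |>.2 ⟨v',
          by rw [eval_tauArg]; exact tau_mono χ f hle hv', hd'⟩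
      obtain ⟨s₀, hs₀⟩ := exists_bound hmono n₀ hmin
      refine ⟨max st s₀, ?_⟩
      rw [eval_tau_rfind']
      simp only [Nat.unpair_pair]
      rw [eval_rfind'2]
      refine Part.mem_map_iff _ |>.2 ⟨n₀, Nat.mem_rfind.2 ⟨?_, fun {m'} hm' => ?_⟩, rfl⟩
      · exact Part.mem_map_iff _ |>.2 ⟨v,
          by rw [eval_tauArg]; exact tau_mono χ f (le_max_left _ _) hst, hd⟩
      · exact hmono m' (le_max_right _ _) (hs₀ m' hm')

theorem RecursiveIn.of_eq_total {O : ℕ →. ℕ} {f g : ℕ → ℕ}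
    (h : RecursiveIn O (toPFun f)) (H : ∀ n, f n = g n) : RecursiveIn O (toPFun g) := by
  obtain ⟨c, hc⟩ := h
  exact ⟨c, hc.trans (by funext n; rw [toPFun, toPFun, H n])⟩

/-! ### Section 3: assembly -/

theorem ystr_recIn (χ : ℕ → ℕ) : RecursiveIn (toPFun χ) (toPFun (ystr χ)) := by
  classical
  have hsel : Computable fun r : ℕ => r.unpair.2.unpair.1 :=
    (Primrec.fst.comp (Primrec.unpair.comp (Primrec.snd.comp Primrec.unpair))).to_comp
  have hF : Computable fun r : ℕ =>
      Encodable.encode ((Denumerable.ofNat (List ℕ) r.unpair.1.unpair.2.unpair.2) ++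
        [r.unpair.2]) := by
    apply Primrec.to_comp
    apply Primrec.encode.comp
    apply Primrec.list_append.comp
    · exact (Primrec.ofNat (List ℕ)).comp (Primrec.snd.comp (Primrec.unpair.comp
        (Primrec.snd.comp (Primrec.unpair.comp (Primrec.fst.comp Primrec.unpair)))))
    · exact Primrec.list_cons.comp (Primrec.snd.comp Primrec.unpair) (Primrec.const [])
  have hg : RecursiveIn (toPFun χ) (toPFun fun q =>
      Encodable.encode ((Denumerable.ofNat (List ℕ) q.unpair.2.unpair.2) ++
        [χ q.unpair.2.unpair.1])) := by
    have h2 := (RecursiveIn.of_computable (O := toPFun χ) hF).totalComp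
      ((RecursiveIn.of_computable Computable.id).totalPair
        (RecursiveIn.oracle.totalComp (RecursiveIn.of_computable hsel)))
    refine h2.of_eq_total fun q => ?_
    simp only [Nat.unpair_pair, id]
  have hb : RecursiveIn (toPFun χ) (toPFun fun _ : ℕ => Encodable.encode ([] : List ℕ)) :=
    RecursiveIn.of_computable (Computable.const _)
  have hrec := hb.totalPrec hg
  have hpair0 : Computable fun n : ℕ => Nat.pair 0 n :=
    (Primrec₂.natPair.comp (Primrec.const 0) Primrec.id).to_comp
  have hcomp := hrec.totalComp (RecursiveIn.of_computable hpair0)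
  refine hcomp.of_eq_total fun n => ?_
  induction n with
  | zero => simp [ystr, Nat.unpair_pair]
  | succ n ih =>
      simp only [Nat.unpair_pair, Nat.rec_add_one] at ih ⊢
      rw [ih]
      simp [ystr, List.range_succ, Denumerable.ofNat_encode]

theorem recIn_char {χ : ℕ → ℕ} {cR : OCode} {d : ℕ → ℕ}
    (hd : RecursiveIn (toPFun χ) (toPFun d)) (nb nt : ℕ) (X : Set ℕ)
    (hX : ∀ n, n ∈ X ↔ (evalo (toPFun χ) cR (Nat.pair (d n) nb)).Dom)
    (hXc : ∀ n, n ∉ X ↔ (evalo (toPFun χ) cR (Nat.pair (d n) nt)).Dom) :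
    RecursiveIn (toPFun χ) (fun n => Part.some (X.indicator (fun _ => 1) n)) := by
  classical
  set c₁ : Code := tau cR with hc₁
  set P : ℕ → ℕ := fun x =>
    cond ((Code.evaln x.unpair.1.unpair.1 c₁
        (Nat.pair x.unpair.1.unpair.2 (Nat.pair x.unpair.2 nb))).isSome) 0
      (cond ((Code.evaln x.unpair.1.unpair.1 c₁
        (Nat.pair x.unpair.1.unpair.2 (Nat.pair x.unpair.2 nt))).isSome) 1 2) with hPdef
  have hksel : Primrec fun x : ℕ => x.unpair.1.unpair.1 :=
    Primrec.fst.comp (Primrec.unpair.comp (Primrec.fst.comp Primrec.unpair))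
  have hargsel : ∀ c : ℕ, Primrec fun x : ℕ =>
      Nat.pair x.unpair.1.unpair.2 (Nat.pair x.unpair.2 c) := fun c =>
    Primrec₂.natPair.comp (Primrec.snd.comp (Primrec.unpair.comp (Primrec.fst.comp
      Primrec.unpair)))
      (Primrec₂.natPair.comp (Primrec.snd.comp Primrec.unpair) (Primrec.const c))
  have hev : ∀ c : ℕ, Primrec fun x : ℕ =>
      (Code.evaln x.unpair.1.unpair.1 c₁
        (Nat.pair x.unpair.1.unpair.2 (Nat.pair x.unpair.2 c))).isSome := fun c =>
    Primrec.option_isSome.comp (Code.primrec_evaln.comp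
      ((hksel.pair (Primrec.const c₁)).pair (hargsel c)))
  have hP : Primrec P := Primrec.cond (hev nb) (Primrec.const 0)
    (Primrec.cond (hev nt) (Primrec.const 1) (Primrec.const 2))
  set t : ℕ → ℕ := fun z => P (Nat.pair
    (Nat.pair z.unpair.2.unpair.1 (ystr χ z.unpair.2.unpair.2)) (d z.unpair.1)) with htdef
  have ht : RecursiveIn (toPFun χ) (toPFun t) := by
    have h1 : Computable fun z : ℕ => z.unpair.2.unpair.1 :=
      (Primrec.fst.comp (Primrec.unpair.comp (Primrec.snd.comp Primrec.unpair))).to_comp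
    have h2 : Computable fun z : ℕ => z.unpair.2.unpair.2 :=
      (Primrec.snd.comp (Primrec.unpair.comp (Primrec.snd.comp Primrec.unpair))).to_comp
    have h3 : Computable fun z : ℕ => z.unpair.1 :=
      (Primrec.fst.comp Primrec.unpair).to_comp
    exact (RecursiveIn.of_computable hP.to_comp).totalComp
      ((RecursiveIn.totalPair (RecursiveIn.of_computable h1)
          ((ystr_recIn χ).totalComp (RecursiveIn.of_computable h2))).totalPair
        (hd.totalComp (RecursiveIn.of_computable h3)))
  have hDom : ∀ u : ℕ, (evalo (toPFun χ) cR u).Dom ↔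
      ∃ k s, (Code.evaln k c₁ (Nat.pair (ystr χ s) u)).isSome := by
    intro u
    constructor
    · intro h
      obtain ⟨y, hy⟩ := Part.dom_iff_mem.1 h
      obtain ⟨s, hs⟩ := tau_complete χ cR hy
      obtain ⟨k, hk⟩ := Code.evaln_complete.1 hs
      exact ⟨k, s, Option.isSome_iff_exists.2 ⟨y, hk⟩⟩
    · rintro ⟨k, s, hks⟩
      obtain ⟨y, hy⟩ := Option.isSome_iff_exists.1 hks
      have hy' : y ∈ (tau cR).eval (Nat.pair (ystr χ s) u) := Code.evaln_sound hy
      exact Part.dom_iff_mem.2 ⟨y, tau_sound χ cR hy'⟩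
  have ht0 : ∀ n w, t (Nat.pair n w) = 0 → n ∈ X := by
    intro n w h
    rw [htdef] at h
    simp only [Nat.unpair_pair] at h
    rw [hPdef] at h
    simp only [Nat.unpair_pair] at h
    rcases h1 : (Code.evaln w.unpair.1 c₁
        (Nat.pair (ystr χ w.unpair.2) (Nat.pair (d n) nb))).isSome with _ | _
    · rw [h1] at h
      rcases h2 : (Code.evaln w.unpair.1 c₁
          (Nat.pair (ystr χ w.unpair.2) (Nat.pair (d n) nt))).isSome with _ | _ <;>
        simp [h2] at h
    · exact (hX n).2 ((hDom _).2 ⟨w.unpair.1, w.unpair.2, h1⟩)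
  have ht1 : ∀ n w, t (Nat.pair n w) = 1 → n ∉ X := by
    intro n w h
    rw [htdef] at h
    simp only [Nat.unpair_pair] at h
    rw [hPdef] at h
    simp only [Nat.unpair_pair] at h
    rcases h1 : (Code.evaln w.unpair.1 c₁
        (Nat.pair (ystr χ w.unpair.2) (Nat.pair (d n) nb))).isSome with _ | _
    · rw [h1] at h
      rcases h2 : (Code.evaln w.unpair.1 c₁
          (Nat.pair (ystr χ w.unpair.2) (Nat.pair (d n) nt))).isSome with _ | _
      · rw [h2] at h; simp at h
      · exact (hXc n).2 ((hDom _).2 ⟨w.unpair.1, w.unpair.2, h2⟩)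
    · rw [h1] at h; simp at h
  have htex : ∀ n, ∃ w, t (Nat.pair n w) ≤ 1 := by
    intro n
    by_cases hn : n ∈ X
    · obtain ⟨k, s, hks⟩ := (hDom (Nat.pair (d n) nb)).1 ((hX n).1 hn)
      refine ⟨Nat.pair k s, ?_⟩
      rw [htdef]
      simp only [Nat.unpair_pair]
      rw [hPdef]
      simp only [Nat.unpair_pair]
      rw [hks]
      simp
    · obtain ⟨k, s, hks⟩ := (hDom (Nat.pair (d n) nt)).1 ((hXc n).1 hn)
      refine ⟨Nat.pair k s, ?_⟩
      rw [htdef]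
      simp only [Nat.unpair_pair]
      rw [hPdef]
      simp only [Nat.unpair_pair]
      rw [hks]
      rcases h1 : (Code.evaln k c₁ (Nat.pair (ystr χ s) (Nat.pair (d n) nb))).isSome with _ | _
        <;> simp
  set q : ℕ → ℕ := fun z => if t z ≤ 1 then 0 else 1 with hqdef
  have hq : RecursiveIn (toPFun χ) (toPFun q) := by
    have hQ : Computable fun v : ℕ => if v ≤ 1 then 0 else 1 :=
      (Primrec.ite (Primrec.nat_le.comp Primrec.id (Primrec.const 1))
        (Primrec.const 0) (Primrec.const 1)).to_comp
    exact (RecursiveIn.of_computable hQ).totalComp ht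
  set g2 : ℕ → ℕ := fun z => 1 - t z with hg2def
  have hg2 : RecursiveIn (toPFun χ) (toPFun g2) := by
    have hQ : Computable fun v : ℕ => 1 - v :=
      (Primrec.nat_sub.comp (Primrec.const 1) Primrec.id).to_comp
    exact (RecursiveIn.of_computable hQ).totalComp ht
  have hF := (RecursiveIn.rfind hq).bindPair hg2
  obtain ⟨c, hc⟩ := hF
  refine ⟨c, ?_⟩
  rw [hc]
  funext n
  rw [Part.eq_some_iff]
  have hp : ∀ w : ℕ, ((fun m : ℕ => m = 0) <$> toPFun q (Nat.pair n w) : Part Bool) =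
      Part.some (decide (q (Nat.pair n w) = 0)) := by
    intro w
    simp [toPFun]
  obtain ⟨w₁, hw₁⟩ := htex n
  have hq₁ : q (Nat.pair n w₁) = 0 := by rw [hqdef]; simp [hw₁]
  have hdom : (Nat.rfind fun w => (fun m : ℕ => m = 0) <$> toPFun q (Nat.pair n w)).Dom := by
    refine Nat.rfind_dom.2 ?_
    refine ⟨w₁, by rw [hp]; simp [hq₁], fun {m} _ => by rw [hp]; trivial⟩
  set w₀ := (Nat.rfind fun w => (fun m : ℕ => m = 0) <$> toPFun q (Nat.pair n w)).get hdom
    with hw₀def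
  have hw₀mem : w₀ ∈ Nat.rfind fun w => (fun m : ℕ => m = 0) <$> toPFun q (Nat.pair n w) :=
    Part.get_mem hdom
  have hspec := Nat.rfind_spec hw₀mem
  rw [hp] at hspec
  have hle : t (Nat.pair n w₀) ≤ 1 := by
    have := Part.mem_some_iff.1 hspec
    have hq0 : q (Nat.pair n w₀) = 0 := by simpa using this.symm
    by_contra hcon
    rw [hqdef] at hq0
    simp [hcon] at hq0
  have hval : g2 (Nat.pair n w₀) = X.indicator (fun _ => 1) n := by
    by_cases hn : n ∈ X
    · have h1 : t (Nat.pair n w₀) ≠ 1 := fun h => (ht1 n w₀ h) hn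
      have h0 : t (Nat.pair n w₀) = 0 := by omega
      rw [hg2def]
      simp [h0, Set.indicator_of_mem hn]
    · have h0 : t (Nat.pair n w₀) ≠ 0 := fun h => hn (ht0 n w₀ h)
      have h1 : t (Nat.pair n w₀) = 1 := by omega
      rw [hg2def]
      simp [h1, Set.indicator_of_notMem hn]
  exact Part.mem_bind_iff.2 ⟨w₀, hw₀mem, by rw [hval]; exact Part.mem_some _⟩


theorem stmt0 (X Y : Set ℕ) (α : Type*) (app : α → α → Part α) (hpca : IsPCA app)
    (abot atop : α) (hne : abot ≠ atop)
    (γ : ℕ →. α) (hγ : IsNumbering γ)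
    (d : ℕ → ℕ) (hd : ComputableIn Y d) (hdec : IsDecider γ abot atop X d)
    (hineq : CEInequiv Y γ) : TuringLE X Y := by
  classical
  obtain ⟨R, ⟨cR, hcR⟩, hRiff⟩ := hineq
  obtain ⟨nb, hnb⟩ := hγ abot
  obtain ⟨nt, hnt⟩ := hγ atop
  have hγnb : γ nb = Part.some abot := Part.eq_some_iff.2 hnb
  have hγnt : γ nt = Part.some atop := Part.eq_some_iff.2 hnt
  have hdn : ∀ n : ℕ, (n ∈ X ∧ γ (d n) = Part.some atop) ∨
      (n ∉ X ∧ γ (d n) = Part.some abot) := by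
    intro n
    by_cases hn : n ∈ X
    · exact Or.inl ⟨hn, (hdec n).2 hn⟩
    · exact Or.inr ⟨hn, (hdec n).1 hn⟩
  have hX : ∀ n : ℕ, n ∈ X ↔ (evalo (chi Y) cR (Nat.pair (d n) nb)).Dom := by
    intro n
    rw [← hcR]
    rcases hdn n with ⟨hn, hg⟩ | ⟨hn, hg⟩
    · refine ⟨fun _ => ?_, fun _ => hn⟩
      refine (hRiff (d n) nb (by rw [hg]; trivial) (by rw [hγnb]; trivial)).2 ?_
      rw [hg, hγnb]
      intro hcon
      exact hne (Part.some_inj.1 hcon).symm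
    · refine ⟨fun h => absurd h hn, fun hR => ?_⟩
      exact absurd (by rw [hg, hγnb]) ((hRiff (d n) nb (by rw [hg]; trivial)
        (by rw [hγnb]; trivial)).1 hR)
  have hXc : ∀ n : ℕ, n ∉ X ↔ (evalo (chi Y) cR (Nat.pair (d n) nt)).Dom := by
    intro n
    rw [← hcR]
    rcases hdn n with ⟨hn, hg⟩ | ⟨hn, hg⟩
    · refine ⟨fun h => absurd hn h, fun hR => ?_⟩
      exact absurd (by rw [hg, hγnt]) ((hRiff (d n) nt (by rw [hg]; trivial)
        (by rw [hγnt]; trivial)).1 hR)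
    · refine ⟨fun _ => ?_, fun _ => hn⟩
      refine (hRiff (d n) nt (by rw [hg]; trivial) (by rw [hγnt]; trivial)).2 ?_
      rw [hg, hγnt]
      intro hcon
      exact hne (Part.some_inj.1 hcon)
  exact recIn_char (χ := fun n => Y.indicator (fun _ => 1) n) hd nb nt X hX hXc


end PCAEmb
end

section
/- Every countable pca embeds into Kleene's second model K2. -/
namespace PCAEmb

/-! ### Auxiliary machinery for the embedding into `K₂` -/

/-- Translation of ordinary partial recursive codes to oracle codes. -/
def transCode : Nat.Partrec.Code → OCode
  | .zero => .zero
  | .succ => .succ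
  | .left => .left
  | .right => .right
  | .pair cf cg => .pair (transCode cf) (transCode cg)
  | .comp cf cg => .comp (transCode cf) (transCode cg)
  | .prec cf cg => .prec (transCode cf) (transCode cg)
  | .rfind' cf => .rfind' (transCode cf)

lemma evalo_transCode (O : ℕ →. ℕ) (c : Nat.Partrec.Code) :
    evalo O (transCode c) = c.eval := by
  induction c <;> simp [transCode, evalo, Nat.Partrec.Code.eval, *] <;> rfl

lemma ofNat_surjective : ∀ c : OCode, ∃ n, OCode.ofNat n = c := by
  intro c
  induction c with
  | zero => exact ⟨0, by rw [OCode.ofNat]⟩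
  | succ => exact ⟨1, by rw [OCode.ofNat]⟩
  | left => exact ⟨2, by rw [OCode.ofNat]⟩
  | right => exact ⟨3, by rw [OCode.ofNat]⟩
  | oracle => exact ⟨4, by rw [OCode.ofNat]⟩
  | pair cf cg ihf ihg =>
    obtain ⟨a, ha⟩ := ihf; obtain ⟨b, hb⟩ := ihg
    refine ⟨4 * Nat.pair a b + 5, ?_⟩
    have h1 : (4 * Nat.pair a b) % 4 = 0 := by omega
    have h2 : (4 * Nat.pair a b) / 4 = Nat.pair a b := by omega
    rw [OCode.ofNat, h1, h2, Nat.unpair_pair, ha, hb]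
    rfl
  | comp cf cg ihf ihg =>
    obtain ⟨a, ha⟩ := ihf; obtain ⟨b, hb⟩ := ihg
    refine ⟨4 * Nat.pair a b + 1 + 5, ?_⟩
    have h1 : (4 * Nat.pair a b + 1) % 4 = 1 := by omega
    have h2 : (4 * Nat.pair a b + 1) / 4 = Nat.pair a b := by omega
    rw [OCode.ofNat, h1, h2, Nat.unpair_pair, ha, hb]
    rfl
  | prec cf cg ihf ihg =>
    obtain ⟨a, ha⟩ := ihf; obtain ⟨b, hb⟩ := ihg
    refine ⟨4 * Nat.pair a b + 2 + 5, ?_⟩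
    have h1 : (4 * Nat.pair a b + 2) % 4 = 2 := by omega
    have h2 : (4 * Nat.pair a b + 2) / 4 = Nat.pair a b := by omega
    rw [OCode.ofNat, h1, h2, Nat.unpair_pair, ha, hb]
    rfl
  | rfind' cf ihf =>
    obtain ⟨a, ha⟩ := ihf
    refine ⟨4 * Nat.pair a 0 + 3 + 5, ?_⟩
    have h1 : (4 * Nat.pair a 0 + 3) % 4 = 3 := by omega
    have h2 : (4 * Nat.pair a 0 + 3) / 4 = Nat.pair a 0 := by omega
    rw [OCode.ofNat, h1, h2, Nat.unpair_pair, ha]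
    rfl

open scoped Classical in
/-- The embedding function, defined by strong recursion on the coordinate. -/
noncomputable def embF {α : Type*} (app : α → α → Part α) (ι : α → ℕ) (e : ℕ) :
    ℕ → α → ℕ
  | 0, _ => e
  | 1, a => ι a
  | (m + 2), a =>
    if h : ∃ b, ι b = (Nat.unpair m).1 ∧ (app a b).Dom then
      embF app ι e (Nat.unpair m).2 ((app a h.choose).get h.choose_spec.2)
    else 0
  decreasing_by
    have := Nat.unpair_right_le m; omega

lemma embF_pair {α : Type*} (app : α → α → Part α) (ι : α → ℕ)
    (hι : Function.Injective ι) (e : ℕ) {a b c : α} (hc : c ∈ app a b) (n : ℕ) :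
    embF app ι e (Nat.pair (ι b) n + 2) a = embF app ι e n c := by
  have h : ∃ b', ι b' = (Nat.unpair (Nat.pair (ι b) n)).1 ∧ (app a b').Dom := by
    refine ⟨b, by simp, Part.dom_iff_mem.2 ⟨c, hc⟩⟩
  rw [embF, dif_pos h]
  have hb : h.choose = b := hι (h.choose_spec.1.trans (by simp))
  obtain ⟨x, hx⟩ := Part.dom_iff_mem.1 h.choose_spec.2
  have hgx : (app a h.choose).get h.choose_spec.2 = x := Part.get_eq_of_mem hx _
  have hxc : x = c := by
    rw [hb] at hx
    exact Part.mem_unique hx hc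
  rw [hgx, hxc, Nat.unpair_pair]

theorem stmt7 (α : Type*) [Countable α] (app : α → α → Part α) (hpca : IsPCA app) :
    ∃ f : α → (ℕ → ℕ), IsPCAEmbedding app k2App f := by
  classical
  obtain ⟨ι, hι⟩ := Countable.exists_injective_nat α
  -- codes for the auxiliary total computable functions
  obtain ⟨cg, hcg⟩ := Nat.Partrec.Code.exists_code.1
    (Nat.Partrec.of_primrec (Primrec.nat_iff.1 (by
      have : Primrec fun n : ℕ => 2 * n + 4 :=
        Primrec.nat_add.comp (Primrec.nat_mul.comp (Primrec.const 2) Primrec.id)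
          (Primrec.const 4)
      exact this)))
  obtain ⟨c3, hc3⟩ := Nat.Partrec.Code.exists_code.1
    (Nat.Partrec.of_primrec (Primrec.nat_iff.1 (Primrec.const 3)))
  obtain ⟨cid, hcid⟩ := Nat.Partrec.Code.exists_code.1
    (Nat.Partrec.of_primrec (Primrec.nat_iff.1 Primrec.id))
  set E : OCode := .comp .oracle (.comp (transCode cg)
    (.pair (.comp .oracle (transCode c3)) (transCode cid))) with hE
  obtain ⟨e, he⟩ := ofNat_surjective E
  refine ⟨fun a n => embF app ι e n a, ?_, ?_⟩
  · intro a a' h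
    have := congrFun h 1
    simp only [embF] at this
    exact hι this
  · intro a a' c hc
    -- the oracle
    set O : ℕ →. ℕ :=
      pjoin (toPFun (fun n => embF app ι e n a)) (toPFun (fun n => embF app ι e n a'))
      with hO
    have hOval : ∀ k, O k =
        Part.some (if k % 2 = 0 then embF app ι e (k / 2) a
          else embF app ι e (k / 2) a') := by
      intro k
      rw [hO]
      unfold pjoin toPFun
      split <;> rfl
    have hstep : ∀ n, evalo O E n = Part.some (embF app ι e n c) := by
      intro n
      have h3 : O 3 = Part.some (ι a') := by
        rw [hOval]
        norm_num
        rw [embF]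
      have hkey : O (2 * Nat.pair (ι a') n + 4) = Part.some (embF app ι e n c) := by
        rw [hOval]
        have h1 : (2 * Nat.pair (ι a') n + 4) % 2 = 0 := by omega
        have h2 : (2 * Nat.pair (ι a') n + 4) / 2 = Nat.pair (ι a') n + 2 := by omega
        rw [h1, h2, if_pos rfl, embF_pair app ι hι e hc n]
      rw [hE]
      simp only [evalo, evalo_transCode, hcg, hc3, hcid]
      simp only [PFun.coe_val, Part.bind_some, Part.map_some, Seq.seq, Part.bind_eq_bind]
      rw [show (Part.some 3 >>= O) = O 3 from Part.bind_some 3 O, h3]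
      simp only [Part.map_eq_map, Part.map_some, Part.bind_some, id_eq, PFun.coe_val]
      exact ((congrArg (· >>= O) (Part.bind_some _ _)).trans (Part.bind_some _ O)).trans hkey
    -- conclude membership in `k2App`
    have h0 : embF app ι e 0 a = e := by rw [embF]
    show (fun n => embF app ι e n c) ∈
      partToTotal (phi (pjoin (toPFun fun n => embF app ι e n a)
        (toPFun fun n => embF app ι e n a')) (embF app ι e 0 a))
    rw [h0]
    unfold phi
    rw [he]
    have hdom : ∀ n, (evalo O E n).Dom := fun n => by rw [hstep n]; trivial
    exact ⟨hdom, funext fun n => by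
      have := hstep n
      exact Part.get_eq_of_mem (this ▸ Part.mem_some _) (hdom n)⟩

end PCAEmb
end
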